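/- For all positive real numbers ℓ and N and every nonnegative integer n, there exists a real number N* such that: for every positive integer m and every (m,ℓ,N)-nice class F of (0,ℓ]-bounded weighted graphs, the class F^{+n,(0,ℓ]} is an (m,ℓ,N*)-nice class of (0,ℓ]-bounded weighted graphs. -/

import Mathlib

open scoped ENNReal

/-- The length of a walk in an edge-weighted graph: the sum of the weights of its edges. -/
def walkLen {V : Type} {G : SimpleGraph V} (w : Sym2 V → ℝ) {x y : V} (p : G.Walk x y) : ℝ :=
  (p.edges.map w).sum

/-- The distance between two vertices of an edge-weighted graph: the infimum of the lengths
of paths between them (`⊤` if there is no such path). -/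
noncomputable def wDist {V : Type} (G : SimpleGraph V) (w : Sym2 V → ℝ) (x y : V) : ℝ≥0∞ :=
  ⨅ q : {q : G.Walk x y // q.IsPath}, ENNReal.ofReal (walkLen w q.1)

lemma wDist_comm {V : Type} (G : SimpleGraph V) (w : Sym2 V → ℝ) (x y : V) :
    wDist G w x y = wDist G w y x := by
  have key : ∀ a b : V, wDist G w a b ≤ wDist G w b a := by
    intro a b
    refine le_iInf fun q => ?_
    refine iInf_le_of_le ⟨q.1.reverse, q.2.reverse⟩ ?_
    simp [walkLen, List.sum_reverse]
  exact le_antisymm (key x y) (key y x)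

/-- The power graph: two distinct vertices are adjacent iff their weighted distance
is at most `r`. -/
noncomputable def powerGraph {V : Type} (G : SimpleGraph V) (w : Sym2 V → ℝ) (r : ℝ) :
    SimpleGraph V where
  Adj x y := x ≠ y ∧ wDist G w x y ≤ ENNReal.ofReal r
  symm := ⟨by
    rintro x y ⟨hne, hle⟩
    exact ⟨hne.symm, by rwa [wDist_comm]⟩⟩
  loopless := ⟨fun x h => h.1 rfl⟩

/-- The unit-length (hop) distance in an unweighted graph. -/
noncomputable def hopDist {V : Type} (L : SimpleGraph V) (x y : V) : ℝ≥0∞ :=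
  ⨅ q : L.Walk x y, (q.length : ℝ≥0∞)

/-- Same-colour adjacency within a vertex set `A`. -/
def colorGraph {V : Type} (K : SimpleGraph V) (A : Set V) {m : ℕ} (c : V → Fin m) :
    SimpleGraph V where
  Adj x y := K.Adj x y ∧ x ∈ A ∧ y ∈ A ∧ c x = c y
  symm := ⟨by
    rintro x y ⟨h, hx, hy, hc⟩
    exact ⟨h.symm, hy, hx, hc.symm⟩⟩
  loopless := ⟨fun x h => K.loopless.irrefl x h.1⟩

/-- The colouring `c` of the subgraph of `K` induced on `A` has weak diameter, measured by the
hop distance of `L`, at most `N`: any two vertices of a monochromatic component of `K ↾ A` are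
at hop distance at most `N` in `L`. -/
def HasWeakDiamLE {V : Type} (K : SimpleGraph V) (A : Set V) (L : SimpleGraph V) {m : ℕ}
    (c : V → Fin m) (N : ℝ) : Prop :=
  ∀ x ∈ A, ∀ y ∈ A, (colorGraph K A c).Reachable x y → hopDist L x y ≤ ENNReal.ofReal N

/-- `nbhd G w r S`: vertices joined to `S` by a path of weighted length at most `r`. -/
def nbhd {V : Type} (G : SimpleGraph V) (w : Sym2 V → ℝ) (r : ℝ) (S : Set V) : Set V :=
  {v | ∃ s ∈ S, ∃ q : G.Walk v s, q.IsPath ∧ walkLen w q ≤ r}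

/-- Deleting a set of vertices (keeping them as isolated vertices of the ambient type). -/
def delVerts {V : Type} (G : SimpleGraph V) (Z : Set V) : SimpleGraph V where
  Adj x y := G.Adj x y ∧ x ∉ Z ∧ y ∉ Z
  symm := ⟨by
    rintro x y ⟨h, hx, hy⟩
    exact ⟨h.symm, hy, hx⟩⟩
  loopless := ⟨fun x h => G.loopless.irrefl x h.1⟩

/-- A weighted graph: a finite simple graph together with positive edge weights. -/
structure WGraph : Type 1 where
  V : Type
  fin : Finite V
  G : SimpleGraph V
  w : Sym2 V → ℝ
  pos : ∀ e ∈ G.edgeSet, 0 < w e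

/-- The extended metric on the vertex set of a weighted graph. -/
noncomputable def WGraph.dist (W : WGraph) : W.V → W.V → ℝ≥0∞ := wDist W.G W.w

/-- All edge weights lie in `(0, ℓ]`. -/
def WGraph.IsBounded (W : WGraph) (ℓ : ℝ) : Prop := ∀ e ∈ W.G.edgeSet, W.w e ≤ ℓ

/-- `f` is an `n`-dimensional control function for the extended metric `d`. -/
def IsControlOn {X : Type} (d : X → X → ℝ≥0∞) (n : ℕ) (f : ℝ → ℝ) : Prop :=
  ∀ r : ℝ, 0 < r → ∃ U : Fin (n + 1) → Set (Set X),
    (∀ x : X, ∃ i, ∃ s ∈ U i, x ∈ s) ∧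
    (∀ i, ∀ s ∈ U i, ∀ t ∈ U i, s ≠ t → ∀ x ∈ s, ∀ y ∈ t, ENNReal.ofReal r < d x y) ∧
    (∀ i, ∀ s ∈ U i, ∀ x ∈ s, ∀ y ∈ s, d x y ≤ ENNReal.ofReal (f r))

/-- The asymptotic dimension of a class of weighted graphs is at most `n`. -/
def asdimLE (F : Set WGraph) (n : ℕ) : Prop :=
  ∃ f : ℝ → ℝ, (∀ x, 0 < x → 0 < f x) ∧ ∀ W ∈ F, IsControlOn W.dist n f

/-- The Assouad–Nagata dimension of a class of weighted graphs is at most `n`: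
some dilation is a common `n`-dimensional control function. -/
def ANdimLE (F : Set WGraph) (n : ℕ) : Prop :=
  ∃ (f : ℝ → ℝ) (c : ℝ), 0 < c ∧ (∀ x, 0 < x → 0 < f x) ∧ (∀ x, 0 < x → f x ≤ c * x) ∧
    ∀ W ∈ F, IsControlOn W.dist n f

/-- `H` is a minor of `G`: there are pairwise disjoint nonempty connected branch sets in `G`,
one for each vertex of `H`, with branch sets of adjacent vertices joined by an edge. -/
def IsMinorOf {α β : Type} (H : SimpleGraph β) (G : SimpleGraph α) : Prop :=
  ∃ B : β → Set α,
    (∀ h, (B h).Nonempty) ∧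
    (∀ h h', h ≠ h' → Disjoint (B h) (B h')) ∧
    (∀ h, (G.induce (B h)).Connected) ∧
    (∀ h h', H.Adj h h' → ∃ a ∈ B h, ∃ b ∈ B h', G.Adj a b)
/-- A class `F` of `(0,ℓ]`-bounded weighted graphs is `(m,ℓ,N)`-nice: for every `(G,φ) ∈ F`,
`(G,φ)^ℓ` is `m`-colourable with weak diameter in `(G,φ)^ℓ` at most `N`. -/
def IsNice (F : Set WGraph) (m : ℕ) (ℓ N : ℝ) : Prop :=
  ∀ W ∈ F, ∃ c : W.V → Fin m,
    HasWeakDiamLE (powerGraph W.G W.w ℓ) Set.univ (powerGraph W.G W.w ℓ) c N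

/-- The weighted graph `(G,φ) − Z` obtained by deleting the vertices of `Z`. -/
noncomputable def WGraph.delete (W : WGraph) (Z : Set W.V) : WGraph where
  V := ↥(Zᶜ)
  fin := by
    haveI := W.fin
    exact Subtype.finite
  G := W.G.induce Zᶜ
  w := fun e => W.w (e.map Subtype.val)
  pos := by
    intro e
    induction e using Sym2.ind with
    | _ a b =>
      intro he
      show 0 < W.w (Sym2.map Subtype.val s(a, b))
      rw [Sym2.map_pair_eq]
      exact W.pos _ (by simpa using he)

/-- The class `F^{+n,(0,ℓ]}`: all `(0,ℓ]`-bounded weighted graphs `(G,φ)` for which there is a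
set `Z` of at most `n` vertices with `(G,φ) − Z ∈ F`. -/
noncomputable def apexClass (F : Set WGraph) (n : ℕ) (ℓ : ℝ) : Set WGraph :=
  {W : WGraph | W.IsBounded ℓ ∧ ∃ Z : Set W.V, Z.ncard ≤ n ∧ W.delete Z ∈ F}

/-!
Colour `G` by extending a nice colouring of `G − Z` arbitrarily to `Z`. An edge `xy` of a
monochromatic walk in `G^ℓ` is witnessed by a path of length at most `ℓ`; when all these paths
avoid `Z`, the walk is monochromatic in `(G − Z)^ℓ`, so its ends are at hop distance at most `N`.
Otherwise pick an apex vertex `z` and cut the walk at the first and at the last witnessing path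
through `z`: the vertices `u`, `v` before and after are within distance `ℓ` of `z`, and the two
remaining pieces avoid `z`. Going `x ⇝ u → z → v ⇝ y` gives the recursion `g (k + 1) = 2 g k + 2`
in the number `k` of apex vertices still to be avoided, hence `N* = 2ⁿ (N + 2) - 2`.
-/

open SimpleGraph

section HopDist

variable {V : Type} (L : SimpleGraph V)

lemma hopDist_eq_edist (x y : V) : hopDist L x y = L.edist x y := by
  simp [hopDist, SimpleGraph.edist]

lemma hopDist_triangle (x y z : V) : hopDist L x z ≤ hopDist L x y + hopDist L y z := by
  simp only [hopDist_eq_edist]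
  exact_mod_cast L.edist_triangle

lemma hopDist_self (x : V) : hopDist L x x = 0 := by
  simp [hopDist_eq_edist]

variable {L}

lemma hopDist_le_one {x y : V} (h : L.Adj x y ∨ x = y) : hopDist L x y ≤ 1 := by
  rw [hopDist_eq_edist]
  exact_mod_cast edist_le_one_iff_adj_or_eq.mpr h

lemma hopDist_map_le {V' : Type} {L' : SimpleGraph V'} (f : L →g L') (x y : V) :
    hopDist L' (f x) (f y) ≤ hopDist L x y :=
  le_iInf fun q => (iInf_le _ (q.map f)).trans (by simp)

end HopDist

section WeightedPaths

variable {V : Type} {G : SimpleGraph V} {w : Sym2 V → ℝ}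

lemma walkLen_append {x y z : V} (p : G.Walk x y) (q : G.Walk y z) :
    walkLen w (p.append q) = walkLen w p + walkLen w q := by
  simp [walkLen, Walk.edges_append]

lemma walkLen_nonneg (hw : ∀ e ∈ G.edgeSet, 0 ≤ w e) {x y : V} (q : G.Walk x y) :
    0 ≤ walkLen w q :=
  List.sum_nonneg <| by
    simpa using fun e he => hw e (q.edges_subset_edgeSet he)

lemma walkLen_map {V' : Type} {G' : SimpleGraph V'} (f : G →g G') (w : Sym2 V' → ℝ) {x y : V}
    (q : G.Walk x y) : walkLen w (q.map f) = walkLen (fun e => w (e.map f)) q := by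
  simp [walkLen, Walk.edges_map, Function.comp_def]

lemma wDist_le_of_isPath {x y : V} {q : G.Walk x y} (hq : q.IsPath) {r : ℝ}
    (h : walkLen w q ≤ r) : wDist G w x y ≤ ENNReal.ofReal r :=
  iInf_le_of_le ⟨q, hq⟩ (ENNReal.ofReal_le_ofReal h)

lemma exists_isPath_walkLen_le_of_wDist_le [Finite V] {x y : V} {r : ℝ} (hr : 0 ≤ r)
    (h : wDist G w x y ≤ ENNReal.ofReal r) : ∃ q : G.Walk x y, q.IsPath ∧ walkLen w q ≤ r := by
  classical
  have := Fintype.ofFinite V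
  have : Nonempty {q : G.Walk x y // q.IsPath} := by
    by_contra hempty
    rw [not_nonempty_iff] at hempty
    simp [wDist, iInf_of_empty] at h
  obtain ⟨q, hq⟩ := exists_eq_ciInf_of_finite (f := fun q : {q : G.Walk x y // q.IsPath} =>
    ENNReal.ofReal (walkLen w q.1))
  rw [wDist, ← hq, ENNReal.ofReal_le_ofReal_iff hr] at h
  exact ⟨q.1, q.2, h⟩

lemma wDist_le_of_mem_support (hw : ∀ e ∈ G.edgeSet, 0 ≤ w e) {x y z : V} {q : G.Walk x y}
    (hq : q.IsPath) {r : ℝ} (hlen : walkLen w q ≤ r) (hz : z ∈ q.support) :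
    wDist G w x z ≤ ENNReal.ofReal r ∧ wDist G w z y ≤ ENNReal.ofReal r := by
  classical
  have hsplit : walkLen w (q.takeUntil z hz) + walkLen w (q.dropUntil z hz) = walkLen w q := by
    rw [← walkLen_append, q.take_spec hz]
  have := walkLen_nonneg hw (q.takeUntil z hz)
  have := walkLen_nonneg hw (q.dropUntil z hz)
  exact ⟨wDist_le_of_isPath (hq.takeUntil hz) (by linarith),
    wDist_le_of_isPath (hq.dropUntil hz) (by linarith)⟩

lemma hopDist_le_one_of_wDist_le {x y : V} {r : ℝ} (h : wDist G w x y ≤ ENNReal.ofReal r) :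
    hopDist (powerGraph G w r) x y ≤ 1 :=
  hopDist_le_one (or_iff_not_imp_right.mpr fun hne => ⟨hne, h⟩)

variable (w) {s : Set V}

lemma wDist_le_wDist_induce (a b : s) :
    wDist G w a b ≤ wDist (G.induce s) (fun e => w (e.map Subtype.val)) a b :=
  le_iInf fun q => iInf_le_of_le ⟨q.1.map (Embedding.induce s).toHom,
    q.2.map Subtype.val_injective⟩ (congrArg ENNReal.ofReal (walkLen_map _ w q.1)).le

lemma wDist_induce_le_of_isPath {x y : V} {q : G.Walk x y} (hq : q.IsPath)
    (hs : ∀ a ∈ q.support, a ∈ s) {r : ℝ} (hlen : walkLen w q ≤ r) :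
    wDist (G.induce s) (fun e => w (e.map Subtype.val))
      ⟨x, hs x q.start_mem_support⟩ ⟨y, hs y q.end_mem_support⟩ ≤ ENNReal.ofReal r := by
  have hmap := q.map_induce hs
  refine wDist_le_of_isPath (q := q.induce s hs) (by rw [← hmap] at hq; exact hq.of_map) ?_
  have hlift := walkLen_map (Embedding.induce s).toHom w (q.induce s hs)
  simp only [hmap] at hlift
  exact hlift ▸ hlen

end WeightedPaths

section Chains

variable {V : Type} {G : SimpleGraph V} {w : Sym2 V → ℝ} {r : ℝ} {m : ℕ} {c : V → Fin m}
  {T : Set V} {x y : V}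

/-- An edge of a `c`-monochromatic walk in `(G,w)^r`, witnessed by a path that avoids `T`. -/
def ColorStep (G : SimpleGraph V) (w : Sym2 V → ℝ) (r : ℝ) (c : V → Fin m) (T : Set V)
    (x y : V) : Prop :=
  c x = c y ∧ ∃ q : G.Walk x y, q.IsPath ∧ walkLen w q ≤ r ∧ ∀ a ∈ q.support, a ∉ T

lemma ColorStep.anti {T' : Set V} (hT : T' ⊆ T) (h : ColorStep G w r c T x y) :
    ColorStep G w r c T' x y :=
  let ⟨hc, q, hq, hlen, hqT⟩ := h
  ⟨hc, q, hq, hlen, fun a ha haT => hqT a ha (hT haT)⟩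

lemma ColorStep.left_notMem (h : ColorStep G w r c T x y) : x ∉ T :=
  let ⟨_, q, _, _, hqT⟩ := h
  hqT x q.start_mem_support

lemma reflTransGen_colorStep_of_reachable [Finite V] (hr : 0 ≤ r)
    (h : (colorGraph (powerGraph G w r) Set.univ c).Reachable x y) :
    Relation.ReflTransGen (ColorStep G w r c ∅) x y := by
  refine Relation.ReflTransGen.mono (fun a b hab => ?_) x y ((reachable_iff_reflTransGen x y).mp h)
  obtain ⟨⟨-, hd⟩, -, -, hc⟩ := hab
  obtain ⟨q, hq, hlen⟩ := exists_isPath_walkLen_le_of_wDist_le hr hd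
  exact ⟨hc, q, hq, hlen, fun a _ => Set.notMem_empty a⟩

lemma ColorStep.insert_or_wDist_le (hw : ∀ e ∈ G.edgeSet, 0 ≤ w e) (z : V)
    (h : ColorStep G w r c T x y) :
    ColorStep G w r c (insert z T) x y ∨
      wDist G w x z ≤ ENNReal.ofReal r ∧ wDist G w z y ≤ ENNReal.ofReal r := by
  obtain ⟨hc, q, hq, hlen, hqT⟩ := h
  by_cases hz : z ∈ q.support
  · exact Or.inr (wDist_le_of_mem_support hw hq hlen hz)
  · refine Or.inl ⟨hc, q, hq, hlen, fun a ha haT => ?_⟩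
    rcases haT with rfl | haT
    exacts [hz ha, hqT a ha haT]

/-- Cuts a sequence of `ColorStep`s at the first and at the last of its paths through `z`. -/
lemma reflTransGen_colorStep_split (hw : ∀ e ∈ G.edgeSet, 0 ≤ w e) (z : V)
    (h : Relation.ReflTransGen (ColorStep G w r c T) x y) :
    Relation.ReflTransGen (ColorStep G w r c (insert z T)) x y ∨
      ∃ u v, Relation.ReflTransGen (ColorStep G w r c (insert z T)) x u ∧
        wDist G w u z ≤ ENNReal.ofReal r ∧ wDist G w z v ≤ ENNReal.ofReal r ∧
        Relation.ReflTransGen (ColorStep G w r c (insert z T)) v y := by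
  induction h using Relation.ReflTransGen.head_induction_on with
  | refl => exact Or.inl .refl
  | head hstep _ ih =>
    rcases hstep.insert_or_wDist_le hw z with hstep' | ⟨hxz, hzy⟩
    · rcases ih with ih | ⟨u, v, hpre, huz, hzv, hsuf⟩
      · exact Or.inl (ih.head hstep')
      · exact Or.inr ⟨u, v, hpre.head hstep', huz, hzv, hsuf⟩
    · rcases ih with ih | ⟨-, v, -, -, hzv, hsuf⟩
      · exact Or.inr ⟨_, _, .refl, hxz, hzy, ih⟩
      · exact Or.inr ⟨_, v, .refl, hxz, hzv, hsuf⟩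

variable (G w r) in
def powerGraphInduceHom (s : Set V) :
    powerGraph (G.induce s) (fun e => w (e.map Subtype.val)) r →g powerGraph G w r where
  toFun := Subtype.val
  map_rel' := fun {a b} ⟨hne, hd⟩ =>
    ⟨Subtype.val_injective.ne hne, (wDist_le_wDist_induce w a b).trans hd⟩

variable {s : Set V}

lemma ColorStep.colorGraph_induce_adj (h : ColorStep G w r c sᶜ x y) (hxy : x ≠ y) :
    ∃ (hx : x ∈ s) (hy : y ∈ s),
      (colorGraph (powerGraph (G.induce s) (fun e => w (e.map Subtype.val)) r) Set.univ
        (fun a : s => c a)).Adj ⟨x, hx⟩ ⟨y, hy⟩ := by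
  obtain ⟨hc, q, hq, hlen, hqs⟩ := h
  have hs : ∀ a ∈ q.support, a ∈ s := fun a ha => Set.notMem_compl_iff.mp (hqs a ha)
  exact ⟨_, _, ⟨fun h => hxy (congrArg Subtype.val h), wDist_induce_le_of_isPath w hq hs hlen⟩,
    trivial, trivial, hc⟩

lemma reachable_colorGraph_induce_of_reflTransGen
    (h : Relation.ReflTransGen (ColorStep G w r c sᶜ) x y) (hx : x ∈ s) :
    ∃ hy : y ∈ s,
      (colorGraph (powerGraph (G.induce s) (fun e => w (e.map Subtype.val)) r) Set.univ
        (fun a : s => c a)).Reachable ⟨x, hx⟩ ⟨y, hy⟩ := by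
  induction h with
  | refl => exact ⟨hx, .refl _⟩
  | @tail b b' _ hstep ih =>
    obtain ⟨hb, hreach⟩ := ih
    by_cases hbb' : b = b'
    · subst hbb'
      exact ⟨hb, hreach⟩
    · obtain ⟨_, hb', hadj⟩ := hstep.colorGraph_induce_adj hbb'
      exact ⟨hb', hreach.trans hadj.reachable⟩

lemma hopDist_le_of_reflTransGen_colorStep_compl {N : ℝ}
    (hc : HasWeakDiamLE (powerGraph (G.induce s) (fun e => w (e.map Subtype.val)) r) Set.univ
      (powerGraph (G.induce s) (fun e => w (e.map Subtype.val)) r) (fun a : s => c a) N)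
    (h : Relation.ReflTransGen (ColorStep G w r c sᶜ) x y) :
    hopDist (powerGraph G w r) x y ≤ ENNReal.ofReal N := by
  rcases h.cases_head with rfl | ⟨b, hxb, -⟩
  · simp [hopDist_self]
  · have hx : x ∈ s := Set.notMem_compl_iff.mp hxb.left_notMem
    obtain ⟨hy, hreach⟩ := reachable_colorGraph_induce_of_reflTransGen h hx
    exact (hopDist_map_le (powerGraphInduceHom G w r s) ⟨x, hx⟩ ⟨y, hy⟩).trans
      (hc _ trivial _ trivial hreach)

end Chains

section ApexBound

/-- The solution of `g 0 = N`, `g (k + 1) = 2 * g k + 2`. -/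
def apexBound (N : ℝ) (k : ℕ) : ℝ := 2 ^ k * (N + 2) - 2

variable {N : ℝ}

lemma apexBound_succ (k : ℕ) :
    apexBound N (k + 1) = apexBound N k + (1 + (1 + apexBound N k)) := by
  simp only [apexBound, pow_succ]
  ring

lemma apexBound_nonneg (hN : 0 ≤ N) (k : ℕ) : 0 ≤ apexBound N k := by
  have : (1 : ℝ) ≤ 2 ^ k := one_le_pow₀ one_le_two
  simp only [apexBound]
  nlinarith

lemma apexBound_mono (hN : 0 ≤ N) : Monotone (apexBound N) :=
  fun _ _ hkl => by
    simp only [apexBound]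
    gcongr
    exact one_le_two

end ApexBound

section ApexInduction

variable {V : Type} {G : SimpleGraph V} {w : Sym2 V → ℝ} {r : ℝ} {m : ℕ} {c : V → Fin m}

lemma hopDist_le_apexBound (hw : ∀ e ∈ G.edgeSet, 0 ≤ w e) {Z : Set V} {N : ℝ} (hN : 0 ≤ N)
    (hc : HasWeakDiamLE (powerGraph (G.induce Zᶜ) (fun e => w (e.map Subtype.val)) r) Set.univ
      (powerGraph (G.induce Zᶜ) (fun e => w (e.map Subtype.val)) r) (fun a : ↥Zᶜ => c a) N)
    (A : Finset V) {T : Set V} (hZ : Z ⊆ T ∪ A) {x y : V}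
    (h : Relation.ReflTransGen (ColorStep G w r c T) x y) :
    hopDist (powerGraph G w r) x y ≤ ENNReal.ofReal (apexBound N A.card) := by
  classical
  induction A using Finset.induction_on generalizing T x y with
  | empty =>
    simp only [Finset.coe_empty, Set.union_empty] at hZ
    have h' := Relation.ReflTransGen.mono (fun a b hab => ColorStep.anti
      (T' := Zᶜᶜ) (by rwa [compl_compl]) hab) x y h
    simpa [apexBound] using hopDist_le_of_reflTransGen_colorStep_compl hc h'
  | insert z A hzA ih =>
    have hZ' : Z ⊆ insert z T ∪ A := by
      simpa [Set.insert_union, Set.union_insert] using hZ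
    rw [Finset.card_insert_of_notMem hzA]
    rcases reflTransGen_colorStep_split hw z h with h' | ⟨u, v, hxu, huz, hzv, hvy⟩
    · exact (ih hZ' h').trans (ENNReal.ofReal_le_ofReal (apexBound_mono hN (Nat.le_succ _)))
    · set K := powerGraph G w r
      have hg := apexBound_nonneg hN A.card
      calc hopDist K x y ≤ hopDist K x u + (hopDist K u z + (hopDist K z v + hopDist K v y)) := by
            refine (hopDist_triangle K x u y).trans ?_
            gcongr
            refine (hopDist_triangle K u z y).trans ?_
            gcongr
            exact hopDist_triangle K z v y
        _ ≤ ENNReal.ofReal (apexBound N A.card) +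
              (1 + (1 + ENNReal.ofReal (apexBound N A.card))) := by
            gcongr
            exacts [ih hZ' hxu, hopDist_le_one_of_wDist_le huz, hopDist_le_one_of_wDist_le hzv,
              ih hZ' hvy]
        _ = ENNReal.ofReal (apexBound N (A.card + 1)) := by
            rw [apexBound_succ, ENNReal.ofReal_add hg (by positivity),
              ENNReal.ofReal_add zero_le_one (by positivity), ENNReal.ofReal_add zero_le_one hg,
              ENNReal.ofReal_one]

end ApexInduction

/-- Theorem (Lemma `apex_extension`): if `F` is an `(m,ℓ,N)`-nice class of `(0,ℓ]`-bounded
weighted graphs, then `F^{+n,(0,ℓ]}` is an `(m,ℓ,N*)`-nice class of `(0,ℓ]`-bounded weighted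
graphs, where `N*` depends only on `ℓ`, `N` and `n`. -/
theorem apex_extension (ℓ N : ℝ) (hℓ : 0 < ℓ) (hN : 0 < N) (n : ℕ) :
    ∃ Nstar : ℝ, ∀ m : ℕ, 0 < m → ∀ F : Set WGraph,
      (∀ W ∈ F, W.IsBounded ℓ) → IsNice F m ℓ N →
        IsNice (apexClass F n ℓ) m ℓ Nstar := by
  classical
  refine ⟨apexBound N n, fun m hm F _ hnice W ⟨_, Z, hZ, hWZ⟩ => ?_⟩
  have := W.fin
  obtain ⟨c', hc'⟩ := hnice _ hWZ
  let c : W.V → Fin m := fun v => if hv : v ∈ Zᶜ then c' ⟨v, hv⟩ else ⟨0, hm⟩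
  have hc : (fun a : ↥Zᶜ => c a) = c' := funext fun a => dif_pos a.2
  have hw : ∀ e ∈ W.G.edgeSet, 0 ≤ W.w e := fun e he => (W.pos e he).le
  refine ⟨c, fun x _ y _ hxy => ?_⟩
  calc hopDist _ x y ≤ ENNReal.ofReal (apexBound N (Set.toFinite Z).toFinset.card) :=
        hopDist_le_apexBound hw hN.le (hc ▸ hc') _ (by simp)
          (reflTransGen_colorStep_of_reachable hℓ.le hxy)
    _ ≤ ENNReal.ofReal (apexBound N n) := by
        refine ENNReal.ofReal_le_ofReal (apexBound_mono hN.le ?_)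
        rwa [← Set.ncard_eq_toFinset_card]
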